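/- Let C be a convex subset of a Hausdorff topological vector space, D an arbitrary convex set, and f : C × D → ℝ a function such that (i) for each y ∈ D, x ↦ f(x, y) is convex on C and the sublevel set {x ∈ C : f(x, y) ≤ c} is compact for every c ∈ ℝ, and (ii) for each x ∈ C, y ↦ f(x, y) is concave on D. Then inf_{x ∈ C} sup_{y ∈ D} f(x, y) = sup_{y ∈ D} inf_{x ∈ C} f(x, y). -/

import Mathlib

open MeasureTheory Filter Topology
open scoped ENNReal

noncomputable section

namespace MaxLebExt

variable {Ω : Type*} [MeasurableSpace Ω]

/-- Membership in `L^∞(μ)`. -/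
def MemLinf (μ : Measure Ω) (X : Ω → ℝ) : Prop :=
  MemLp X ⊤ μ

/-- Extended-real-valued expectation `𝔼[f] ∈ [-∞,∞]`, defined as the integral of the
positive part minus the integral of the negative part. -/
def eE (μ : Measure Ω) (f : Ω → ℝ) : EReal :=
  ((∫⁻ ω, ENNReal.ofReal (f ω) ∂μ : ℝ≥0∞) : EReal) -
    ((∫⁻ ω, ENNReal.ofReal (-f ω) ∂μ : ℝ≥0∞) : EReal)

/-- The conjugate `φ*(Z) = sup_{X ∈ L^∞} (𝔼[XZ] - φ(X)) ∈ (-∞,∞]` of a function `φ`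
defined (at least) on `L^∞`. -/
def conj (μ : Measure Ω) (φ : (Ω → ℝ) → ℝ) (Z : Ω → ℝ) : EReal :=
  ⨆ X : {X : Ω → ℝ // MemLinf μ X}, (((∫ ω, X.1 ω * Z ω ∂μ) - φ X.1 : ℝ) : EReal)

/-- `Z ∈ dom φ* = {Z ∈ L¹ : φ*(Z) < ∞}`. -/
def MemDom (μ : Measure Ω) (φ : (Ω → ℝ) → ℝ) (Z : Ω → ℝ) : Prop :=
  Integrable Z μ ∧ conj μ φ Z < ⊤

/-- `X ∈ 𝒟₀ = {X ∈ L⁰ : X⁻ Z ∈ L¹ for all Z ∈ dom φ*}`. -/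
def MemD0 (μ : Measure Ω) (φ : (Ω → ℝ) → ℝ) (X : Ω → ℝ) : Prop :=
  AEStronglyMeasurable X μ ∧
    ∀ Z : Ω → ℝ, MemDom μ φ Z → Integrable (fun ω => max (-(X ω)) 0 * Z ω) μ

/-- The canonical extension `φ̂(X) = sup_{Z ∈ dom φ*} (𝔼[XZ] - φ*(Z))`. -/
def hatphi (μ : Measure Ω) (φ : (Ω → ℝ) → ℝ) (X : Ω → ℝ) : EReal :=
  ⨆ Z : {Z : Ω → ℝ // MemDom μ φ Z},
    (eE μ (fun ω => X ω * Z.1 ω) - conj μ φ Z.1)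

/-- The truncated tail `α|X| 1_{{|X| > N}}`. -/
def tailFn (X : Ω → ℝ) (α : ℝ) (N : ℕ) : Ω → ℝ :=
  Set.indicator {ω | (N : ℝ) < |X ω|} fun ω => α * |X ω|

/-- `X ∈ M^φ̂_u`. -/
def MemMu (μ : Measure Ω) (φ : (Ω → ℝ) → ℝ) (X : Ω → ℝ) : Prop :=
  AEStronglyMeasurable X μ ∧
    ∀ α : ℝ, 0 < α →
      Tendsto (fun N : ℕ => hatphi μ φ (tailFn X α N)) atTop (𝓝 (0 : EReal))

/-- `X ∈ M^φ̂` (the Orlicz heart of `φ̂`). -/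
def MemM (μ : Measure Ω) (φ : (Ω → ℝ) → ℝ) (X : Ω → ℝ) : Prop :=
  AEStronglyMeasurable X μ ∧
    ∀ α : ℝ, 0 < α → hatphi μ φ (fun ω => α * |X ω|) < ⊤

/-- A finite monotone convex function on `L^∞`, compatible with a.e. equality. -/
structure IsMCLinf (μ : Measure Ω) (φ : (Ω → ℝ) → ℝ) : Prop where
  congr : ∀ X Y : Ω → ℝ, MemLinf μ X → MemLinf μ Y → X =ᵐ[μ] Y → φ X = φ Y
  mono : ∀ X Y : Ω → ℝ, MemLinf μ X → MemLinf μ Y → X ≤ᵐ[μ] Y → φ X ≤ φ Y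
  convex : ∀ X Y : Ω → ℝ, MemLinf μ X → MemLinf μ Y → ∀ t : ℝ, 0 ≤ t → t ≤ 1 →
    φ (fun ω => t * X ω + (1 - t) * Y ω) ≤ t * φ X + (1 - t) * φ Y

/-- The Lebesgue property on `L^∞`. -/
def LebesgueLinf (μ : Measure Ω) (φ : (Ω → ℝ) → ℝ) : Prop :=
  ∀ (X : ℕ → Ω → ℝ) (X₀ : Ω → ℝ), (∀ n, MemLinf μ (X n)) → MemLinf μ X₀ →
    (∃ C : ℝ, ∀ n, ∀ᵐ ω ∂μ, |X n ω| ≤ C) →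
    (∀ᵐ ω ∂μ, Tendsto (fun n => X n ω) atTop (𝓝 (X₀ ω))) →
    Tendsto (fun n => φ (X n)) atTop (𝓝 (φ X₀))

/-- The Fatou property on `L^∞`. -/
def FatouLinf (μ : Measure Ω) (φ : (Ω → ℝ) → ℝ) : Prop :=
  ∀ (X : ℕ → Ω → ℝ) (X₀ : Ω → ℝ), (∀ n, MemLinf μ (X n)) → MemLinf μ X₀ →
    (∃ C : ℝ, ∀ n, ∀ᵐ ω ∂μ, |X n ω| ≤ C) →
    (∀ᵐ ω ∂μ, Tendsto (fun n => X n ω) atTop (𝓝 (X₀ ω))) →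
    φ X₀ ≤ liminf (fun n => φ (X n)) atTop

/-- Standing assumption: `φ₀` is a finite monotone convex function on `L^∞` with the
Lebesgue property and `φ₀(0) = 0`. -/
structure Standing (μ : Measure Ω) (φ₀ : (Ω → ℝ) → ℝ) : Prop where
  mc : IsMCLinf μ φ₀
  leb : LebesgueLinf μ φ₀
  zero : φ₀ 0 = 0

/-- A solid vector subspace (ideal) of `L⁰`. -/
structure IsSolidSpace (μ : Measure Ω) (S : Set (Ω → ℝ)) : Prop where
  aesm : ∀ X ∈ S, AEStronglyMeasurable X μ
  zero : (0 : Ω → ℝ) ∈ S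
  add : ∀ X ∈ S, ∀ Y ∈ S, X + Y ∈ S
  smul : ∀ c : ℝ, ∀ X ∈ S, (fun ω => c * X ω) ∈ S
  solid : ∀ X : Ω → ℝ, AEStronglyMeasurable X μ → ∀ Y ∈ S,
    (∀ᵐ ω ∂μ, |X ω| ≤ |Y ω|) → X ∈ S

/-- A finite monotone convex function on a solid space `S`. -/
structure IsMCOn (μ : Measure Ω) (S : Set (Ω → ℝ)) (ψ : (Ω → ℝ) → ℝ) : Prop where
  congr : ∀ X ∈ S, ∀ Y ∈ S, X =ᵐ[μ] Y → ψ X = ψ Y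
  mono : ∀ X ∈ S, ∀ Y ∈ S, X ≤ᵐ[μ] Y → ψ X ≤ ψ Y
  convex : ∀ X ∈ S, ∀ Y ∈ S, ∀ t : ℝ, 0 ≤ t → t ≤ 1 →
    ψ (fun ω => t * X ω + (1 - t) * Y ω) ≤ t * ψ X + (1 - t) * ψ Y

/-- The Lebesgue property on a solid space `S`. -/
def LebesgueOn (μ : Measure Ω) (S : Set (Ω → ℝ)) (ψ : (Ω → ℝ) → ℝ) : Prop :=
  ∀ (X : ℕ → Ω → ℝ) (X₀ Y : Ω → ℝ), (∀ n, X n ∈ S) → X₀ ∈ S → Y ∈ S →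
    (∀ n, ∀ᵐ ω ∂μ, |X n ω| ≤ Y ω) →
    (∀ᵐ ω ∂μ, Tendsto (fun n => X n ω) atTop (𝓝 (X₀ ω))) →
    Tendsto (fun n => ψ (X n)) atTop (𝓝 (ψ X₀))

/-- The Fatou property on a solid space `S`. -/
def FatouOn (μ : Measure Ω) (S : Set (Ω → ℝ)) (ψ : (Ω → ℝ) → ℝ) : Prop :=
  ∀ (X : ℕ → Ω → ℝ) (X₀ Y : Ω → ℝ), (∀ n, X n ∈ S) → X₀ ∈ S → Y ∈ S →
    (∀ n, ∀ᵐ ω ∂μ, |X n ω| ≤ Y ω) →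
    (∀ᵐ ω ∂μ, Tendsto (fun n => X n ω) atTop (𝓝 (X₀ ω))) →
    ψ X₀ ≤ liminf (fun n => ψ (X n)) atTop

/-- A proper monotone convex function with values in `(-∞,∞]` on a solid space `S`. -/
structure IsMCOnE (μ : Measure Ω) (S : Set (Ω → ℝ)) (φ : (Ω → ℝ) → EReal) : Prop where
  congr : ∀ X ∈ S, ∀ Y ∈ S, X =ᵐ[μ] Y → φ X = φ Y
  mono : ∀ X ∈ S, ∀ Y ∈ S, X ≤ᵐ[μ] Y → φ X ≤ φ Y
  convex : ∀ X ∈ S, ∀ Y ∈ S, ∀ t : ℝ, 0 < t → t < 1 →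
    φ (fun ω => t * X ω + (1 - t) * Y ω) ≤ (t : EReal) * φ X + ((1 - t : ℝ) : EReal) * φ Y
  ne_bot : ∀ X ∈ S, φ X ≠ ⊥
  exists_ne_top : ∃ X ∈ S, φ X ≠ ⊤

/-- The Lebesgue property on a solid space `S` for an extended-real-valued function. -/
def LebesgueOnE (μ : Measure Ω) (S : Set (Ω → ℝ)) (φ : (Ω → ℝ) → EReal) : Prop :=
  ∀ (X : ℕ → Ω → ℝ) (X₀ Y : Ω → ℝ), (∀ n, X n ∈ S) → X₀ ∈ S → Y ∈ S →
    (∀ n, ∀ᵐ ω ∂μ, |X n ω| ≤ Y ω) →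
    (∀ᵐ ω ∂μ, Tendsto (fun n => X n ω) atTop (𝓝 (X₀ ω))) →
    Tendsto (fun n => φ (X n)) atTop (𝓝 (φ X₀))

/-- `(φ, S)` is a Lebesgue extension of `(φ₀, L^∞)`. -/
structure IsLebExt (μ : Measure Ω) (φ₀ : (Ω → ℝ) → ℝ)
    (S : Set (Ω → ℝ)) (φ : (Ω → ℝ) → EReal) : Prop where
  solid : IsSolidSpace μ S
  linf_mem : ∀ X : Ω → ℝ, MemLinf μ X → X ∈ S
  mc : IsMCOnE μ S φ
  leb : LebesgueOnE μ S φ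
  restrict : ∀ X : Ω → ℝ, MemLinf μ X → φ X = (φ₀ X : EReal)

/-- The gauge (Luxemburg-type) functional `‖X‖_φ̂ = inf {λ > 0 : φ̂(|X|/λ) ≤ 1}`,
with `inf ∅ = +∞`. -/
def gauge (μ : Measure Ω) (φ : (Ω → ℝ) → ℝ) (X : Ω → ℝ) : EReal :=
  sInf {l : EReal | ∃ r : ℝ, 0 < r ∧ l = (r : EReal) ∧
    hatphi μ φ (fun ω => |X ω| / r) ≤ 1}

/-!
Weak duality gives one inequality. For the other, fix a real `c` above `sup_y inf_x f`, so that
every `y ∈ D` has some `x ∈ C` with `f x y < c`. Given `y₁, …, yₙ ∈ D`, the vectors of `ℝⁿ` that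
strictly dominate `(f x yᵢ)ᵢ` for some `x ∈ C` form an open convex upper set. If no `x ∈ C` had
`f x yᵢ ≤ c` for all `i`, the constant vector `c` would lie outside it, and separating it by
Hahn–Banach gives probability weights `w` with `c ≤ ∑ wᵢ f x yᵢ ≤ f x (∑ wᵢ • yᵢ)` on `C`,
by concavity; this contradicts the choice of `c` at `∑ wᵢ • yᵢ ∈ D`. So the compact sublevel sets
`{x ∈ C | f x y ≤ c}` have the finite intersection property, and a common point `x` shows
`inf_x sup_y f ≤ c`.
-/

theorem _root_.IsUpperSet.map_nonpos_of_forall_lt {E : Type*} [AddCommGroup E]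
    [PartialOrder E] [IsOrderedAddMonoid E] [Module ℝ E] [PosSMulMono ℝ E] {A : Set E}
    (hA : IsUpperSet A) {a : E} (ha : a ∈ A) (ℓ : E →ₗ[ℝ] ℝ) {r : ℝ} (hℓ : ∀ b ∈ A, ℓ b < r)
    {v : E} (hv : 0 ≤ v) :
    ℓ v ≤ 0 := by
  by_contra! hpos
  set t := (r - ℓ a) / ℓ v
  have ht : 0 ≤ t := div_nonneg (sub_nonneg.2 (hℓ a ha).le) hpos.le
  have hmem : a + t • v ∈ A := hA (le_add_of_nonneg_right (smul_nonneg ht hv)) ha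
  have : ℓ (a + t • v) = r := by
    rw [map_add, map_smul, smul_eq_mul, div_mul_cancel₀ _ hpos.ne']
    ring
  exact (hℓ _ hmem).ne this

theorem _root_.IsUpperSet.exists_mem_stdSimplex_dotProduct_lt {ι : Type*} [Fintype ι]
    {A : Set (ι → ℝ)} (hup : IsUpperSet A) (hconv : Convex ℝ A) (hopen : IsOpen A)
    (hne : A.Nonempty) {c : ι → ℝ} (hc : c ∉ A) :
    ∃ w ∈ stdSimplex ℝ ι, ∀ a ∈ A, w ⬝ᵥ c < w ⬝ᵥ a := by
  classical
  obtain ⟨ℓ, hℓ⟩ := geometric_hahn_banach_open_point hconv hopen hc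
  obtain ⟨a₀, ha₀⟩ := hne
  set v : ι → ℝ := fun i => -ℓ (Pi.single i 1)
  have hℓv : ∀ a, ℓ a = -(v ⬝ᵥ a) := fun a => by
    rw [← ContinuousLinearMap.coe_coe, ℓ.toLinearMap.pi_apply_eq_sum_univ a]
    have hsingle (i : ι) : (fun j => if i = j then (1 : ℝ) else 0) = Pi.single i 1 := by
      ext j
      simp [Pi.single_apply, @eq_comm _ i j]
    simp [hsingle, v, dotProduct, mul_comm]
  have hv (i : ι) : 0 ≤ v i := neg_nonneg.2 <|
    hup.map_nonpos_of_forall_lt ha₀ ℓ.toLinearMap hℓ (Pi.single_nonneg.2 zero_le_one)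
  have hsum : 0 < ∑ i, v i := by
    refine (Finset.sum_nonneg fun i _ => hv i).lt_of_ne fun h => ?_
    have hv0 : v = 0 := funext fun i =>
      (Finset.sum_eq_zero_iff_of_nonneg fun i _ => hv i).1 h.symm i (Finset.mem_univ i)
    simpa [hℓv, hv0] using hℓ a₀ ha₀
  refine ⟨(∑ i, v i)⁻¹ • v, ⟨fun i => ?_, ?_⟩, fun a ha => ?_⟩
  · exact mul_nonneg (inv_nonneg.2 hsum.le) (hv i)
  · simp [← Finset.mul_sum, hsum.ne']
  · have := hℓ a ha
    rw [hℓv, hℓv, neg_lt_neg_iff] at this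
    simpa [smul_dotProduct] using mul_lt_mul_of_pos_left this (inv_pos.2 hsum)

theorem _root_.ConvexOn.exists_mem_stdSimplex_le_sum_of_forall_exists_le {E ι : Type*}
    [AddCommGroup E] [Module ℝ E] [Fintype ι] {C : Set E} (hCne : C.Nonempty) {g : ι → E → ℝ}
    (hg : ∀ i, ConvexOn ℝ C (g i)) {c : ℝ} (h : ∀ x ∈ C, ∃ i, c ≤ g i x) :
    ∃ w ∈ stdSimplex ℝ ι, ∀ x ∈ C, c ≤ ∑ i, w i * g i x := by
  obtain ⟨x₀, hx₀⟩ := hCne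
  set A : Set (ι → ℝ) := {a | ∃ x ∈ C, ∀ i, g i x < a i}
  have hup : IsUpperSet A := fun a b hab ⟨x, hx, hlt⟩ =>
    ⟨x, hx, fun i => (hlt i).trans_le (hab i)⟩
  have hconv : Convex ℝ A := by
    obtain ⟨i₀, -⟩ := h x₀ hx₀
    rintro a ⟨x₁, hx₁, h₁⟩ b ⟨x₂, hx₂, h₂⟩ s t hs ht hst
    refine ⟨s • x₁ + t • x₂, (hg i₀).1 hx₁ hx₂ hs ht hst, fun i => ?_⟩
    have hp₁ : (x₁, a i) ∈ {p : E × ℝ | p.1 ∈ C ∧ g i p.1 < p.2} := ⟨hx₁, h₁ i⟩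
    have hp₂ : (x₂, b i) ∈ {p : E × ℝ | p.1 ∈ C ∧ g i p.1 < p.2} := ⟨hx₂, h₂ i⟩
    exact ((hg i).convex_strict_epigraph hp₁ hp₂ hs ht hst).2
  have hopen : IsOpen A := by
    have : A = ⋃ x ∈ C, Set.univ.pi fun i => Set.Ioi (g i x) := by ext a; simp [A]
    rw [this]
    exact isOpen_biUnion fun x _ => isOpen_set_pi Set.finite_univ fun i _ => isOpen_Ioi
  have hcA : (fun _ => c) ∉ A := fun ⟨x, hx, hlt⟩ =>
    let ⟨i, hi⟩ := h x hx
    (hi.trans_lt (hlt i)).false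
  have hA : (fun i => g i x₀ + 1) ∈ A := ⟨x₀, hx₀, fun i => lt_add_one _⟩
  obtain ⟨w, hw, hsep⟩ := hup.exists_mem_stdSimplex_dotProduct_lt hconv hopen ⟨_, hA⟩ hcA
  refine ⟨w, hw, fun x hx => le_of_forall_pos_lt_add fun ε hε => ?_⟩
  have := hsep (fun i => g i x + ε) ⟨x, hx, fun i => lt_add_of_pos_right _ hε⟩
  simpa [dotProduct, mul_add, Finset.sum_add_distrib, ← Finset.sum_mul, hw.2] using this

section Minimax

variable {E F : Type*} [AddCommGroup E] [Module ℝ E] [AddCommGroup F] [Module ℝ F]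
  {C : Set E} {D : Set F} {f : E → F → ℝ} {c : ℝ}

theorem _root_.exists_forall_finset_le_of_forall_exists_lt (hCne : C.Nonempty)
    (hconv : ∀ y ∈ D, ConvexOn ℝ C fun x => f x y)
    (hconc : ∀ x ∈ C, ConcaveOn ℝ D fun y => f x y)
    (hlt : ∀ y ∈ D, ∃ x ∈ C, f x y < c) (s : Finset F) (hs : ↑s ⊆ D) :
    ∃ x ∈ C, ∀ y ∈ s, f x y ≤ c := by
  by_contra! H
  obtain ⟨w, hw, hwc⟩ := ConvexOn.exists_mem_stdSimplex_le_sum_of_forall_exists_le hCne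
    (g := fun (y : s) x => f x y) (fun y => hconv y (hs y.2))
    fun x hx => let ⟨y, hy, hxy⟩ := H x hx; ⟨⟨y, hy⟩, hxy.le⟩
  obtain ⟨x₀, hx₀⟩ := hCne
  have hmem : ∑ y : s, w y • (y : F) ∈ D :=
    (hconc x₀ hx₀).1.sum_mem (fun y _ => hw.1 y) hw.2 fun y _ => hs y.2
  obtain ⟨x, hx, hfx⟩ := hlt _ hmem
  have hjensen : ∑ y : s, w y • f x y ≤ f x (∑ y : s, w y • (y : F)) :=
    (hconc x hx).le_map_sum (fun y _ => hw.1 y) hw.2 fun y _ => hs y.2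
  exact (hfx.trans_le' (hwc x hx |>.trans hjensen)).false

theorem _root_.exists_forall_le_of_forall_exists_lt [TopologicalSpace E] [T2Space E]
    (hCne : C.Nonempty)
    (hconv : ∀ y ∈ D, ConvexOn ℝ C fun x => f x y)
    (hcomp : ∀ y ∈ D, IsCompact {x | x ∈ C ∧ f x y ≤ c})
    (hconc : ∀ x ∈ C, ConcaveOn ℝ D fun y => f x y)
    (hlt : ∀ y ∈ D, ∃ x ∈ C, f x y < c) :
    ∃ x ∈ C, ∀ y ∈ D, f x y ≤ c := by
  classical
  obtain rfl | ⟨y₀, hy₀⟩ := D.eq_empty_or_nonempty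
  · obtain ⟨x₀, hx₀⟩ := hCne
    exact ⟨x₀, hx₀, by simp⟩
  set Z : D → Set E := fun y => {x | x ∈ C ∧ f x y ≤ c}
  have hfin : ∀ u : Finset D, (Z ⟨y₀, hy₀⟩ ∩ ⋂ y ∈ u, Z y).Nonempty := fun u => by
    obtain ⟨x, hx, hxc⟩ := exists_forall_finset_le_of_forall_exists_lt hCne hconv hconc hlt
      (insert y₀ (u.map (Function.Embedding.subtype _))) (by simp [Set.insert_subset_iff, hy₀])
    refine ⟨x, ⟨hx, hxc _ (Finset.mem_insert_self _ _)⟩, Set.mem_iInter₂.2 fun y hy => ?_⟩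
    exact ⟨hx, hxc _ (Finset.mem_insert_of_mem (Finset.mem_map_of_mem _ hy))⟩
  obtain ⟨x, ⟨hx, -⟩, hxZ⟩ := (hcomp y₀ hy₀).inter_iInter_nonempty Z
    (fun y => (hcomp y y.2).isClosed) hfin
  exact ⟨x, hx, fun y hy => (Set.mem_iInter.1 hxZ ⟨y, hy⟩).2⟩

end Minimax

theorem stmt19_general {E F : Type*} [AddCommGroup E] [Module ℝ E] [TopologicalSpace E] [T2Space E]
    [AddCommGroup F] [Module ℝ F]
    (C : Set E) (D : Set F)
    (hne : C.Nonempty ∨ D.Nonempty)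
    (f : E → F → ℝ)
    (hconv : ∀ y ∈ D, ConvexOn ℝ C fun x => f x y)
    (hcomp : ∀ y ∈ D, ∀ c : ℝ, IsCompact {x | x ∈ C ∧ f x y ≤ c})
    (hconc : ∀ x ∈ C, ConcaveOn ℝ D fun y => f x y) :
    ⨅ x ∈ C, ⨆ y ∈ D, (f x y : EReal) = ⨆ y ∈ D, ⨅ x ∈ C, (f x y : EReal) := by
  refine le_antisymm ?_ (iSup₂_iInf₂_le_iInf₂_iSup₂ C D _)
  obtain rfl | hCne := C.eq_empty_or_nonempty
  · obtain ⟨y₀, hy₀⟩ := hne.resolve_left Set.not_nonempty_empty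
    simp [biSup_const ⟨y₀, hy₀⟩]
  refine EReal.le_of_forall_lt_iff_le.1 fun c hc => ?_
  have hlt : ∀ y ∈ D, ∃ x ∈ C, f x y < c := fun y hy => by
    simpa [iInf_lt_iff] using (le_iSup₂ y hy).trans_lt hc
  obtain ⟨x, hx, hxc⟩ :=
    exists_forall_le_of_forall_exists_lt hCne hconv (fun y hy => hcomp y hy c) hconc hlt
  exact iInf₂_le_of_le x hx (iSup₂_le fun y hy => EReal.coe_le_coe_iff.2 (hxc y hy))

/-- minimax theorem: if `C` is a convex subset of a Hausdorff
topological vector space, `D` a convex set, and `f : C × D → ℝ` is convex with compact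
sublevel sets in the first variable and concave in the second, then
`inf_C sup_D f = sup_D inf_C f`. -/
theorem stmt19 {E F : Type*} [AddCommGroup E] [Module ℝ E] [TopologicalSpace E]
    [T2Space E] [IsTopologicalAddGroup E] [ContinuousSMul ℝ E]
    [AddCommGroup F] [Module ℝ F]
    (C : Set E) (hC : Convex ℝ C) (D : Set F) (hD : Convex ℝ D)
    (hne : C.Nonempty ∨ D.Nonempty)
    (f : E → F → ℝ)
    (hconv : ∀ y ∈ D, ConvexOn ℝ C fun x => f x y)
    (hcomp : ∀ y ∈ D, ∀ c : ℝ, IsCompact {x | x ∈ C ∧ f x y ≤ c})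
    (hconc : ∀ x ∈ C, ConcaveOn ℝ D fun y => f x y) :
    ⨅ x ∈ C, ⨆ y ∈ D, (f x y : EReal) = ⨆ y ∈ D, ⨅ x ∈ C, (f x y : EReal) :=
  stmt19_general C D hne f hconv hcomp hconc

end MaxLebExt
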